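/- arXiv:2301.08309 — 2 statements merged into one kernel-verified Lean document; each statement's English description precedes it below -/
import Mathlib

section
/- Let α ∈ (−1, ∞), ε > 0 and R > 0. Then ∫_{B_R(0)} ε·|x|^{2α} · (ε + |x|^{2(1+α)})^{−2} dx = (π/(1+α)) · R^{2(1+α)} / (ε + R^{2(1+α)}), where the integral is over the open Euclidean ball B_R(0) ⊂ ℝ². -/
/-!
Polar coordinates turn the integral of a radial function over `B_R(0) ⊂ ℝ²` into
`2π ∫₀^R r f(r) dr`. With `p = 2(1+α) > 0`, the radial integrand
`r · ε r^{2α} / (ε + r^p)²` is `p⁻¹` times the derivative of `r^p / (ε + r^p)`,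
which vanishes at `r = 0`.
-/

open MeasureTheory Real Set Metric

theorem setIntegral_ball_fun_norm_addHaar {E F : Type*} [NormedAddCommGroup E]
    [NormedSpace ℝ E] [FiniteDimensional ℝ E] [Nontrivial E] [MeasurableSpace E] [BorelSpace E]
    [NormedAddCommGroup F] [NormedSpace ℝ F] (μ : Measure E) [μ.IsAddHaarMeasure]
    (f : ℝ → F) (R : ℝ) :
    ∫ x in ball (0 : E) R, f ‖x‖ ∂μ = Module.finrank ℝ E • μ.real (ball 0 1) •
      ∫ r in Ioo 0 R, r ^ (Module.finrank ℝ E - 1) • f r := by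
  have hind : ∀ r : ℝ, r ^ (Module.finrank ℝ E - 1) • (Iio R).indicator f r
      = (Iio R).indicator (fun r ↦ r ^ (Module.finrank ℝ E - 1) • f r) r := fun r ↦
    ((Iio R).indicator_smul_apply _ _ r).symm
  rw [← integral_indicator measurableSet_ball]
  have hball : (ball (0 : E) R).indicator (fun x ↦ f ‖x‖)
      = fun x ↦ (Iio R).indicator f ‖x‖ := by
    ext x
    simp [indicator]
  rw [hball, integral_fun_norm_addHaar, funext hind, setIntegral_indicator measurableSet_Iio,
    Ioi_inter_Iio]

theorem hasDerivAt_rpow_div_const_add_rpow {p ε r : ℝ} (hr : 0 < r) (hε : 0 ≤ ε) :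
    HasDerivAt (fun s ↦ s ^ p / (ε + s ^ p)) (p * ε * r ^ (p - 1) / (ε + r ^ p) ^ 2) r := by
  have hden : ε + r ^ p ≠ 0 := by positivity
  have hrpow := hasDerivAt_rpow_const (p := p) (Or.inl hr.ne')
  exact (hrpow.div (hrpow.const_add ε) hden).congr_deriv (by ring)

theorem integral_Ioo_deriv_rpow_div_const_add_rpow {p ε R : ℝ} (hp : 0 < p) (hε : 0 < ε)
    (hR : 0 ≤ R) :
    ∫ r in Ioo 0 R, p * ε * r ^ (p - 1) / (ε + r ^ p) ^ 2 = R ^ p / (ε + R ^ p) := by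
  have hcont : ContinuousOn (fun s : ℝ ↦ s ^ p / (ε + s ^ p)) (Icc 0 R) := by
    have hrpow : ContinuousOn (fun s : ℝ ↦ s ^ p) (Icc 0 R) :=
      (continuous_rpow_const hp.le).continuousOn
    exact hrpow.div (continuousOn_const.add hrpow) fun s hs ↦ by have := hs.1; positivity
  have hderiv : ∀ r ∈ Ioo 0 R, HasDerivAt (fun s ↦ s ^ p / (ε + s ^ p))
      (p * ε * r ^ (p - 1) / (ε + r ^ p) ^ 2) r := fun r hr ↦
    hasDerivAt_rpow_div_const_add_rpow hr.1 hε.le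
  have hnonneg : ∀ r ∈ Ioo 0 R, 0 ≤ p * ε * r ^ (p - 1) / (ε + r ^ p) ^ 2 := fun r hr ↦ by
    have := hr.1
    positivity
  rw [← integral_Ioc_eq_integral_Ioo, ← intervalIntegral.integral_of_le hR,
    intervalIntegral.integral_eq_sub_of_hasDerivAt_of_le hR hcont hderiv
      ((intervalIntegrable_iff_integrableOn_Ioc_of_le hR).2
        (intervalIntegral.integrableOn_deriv_of_nonneg hcont hderiv hnonneg))]
  simp [zero_rpow hp.ne']

theorem setIntegral_ball_fun_norm_fin_two (f : ℝ → ℝ) (R : ℝ) :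
    ∫ x in ball (0 : EuclideanSpace ℝ (Fin 2)) R, f ‖x‖
      = 2 * π * ∫ r in Ioo 0 R, r * f r := by
  rw [setIntegral_ball_fun_norm_addHaar, finrank_euclideanSpace_fin, measureReal_def,
    EuclideanSpace.volume_ball_fin_two]
  simp [pi_nonneg]
  ring

/-- for `α ∈ (-1, ∞)`, `ε > 0`, `R > 0`,
`∫_{B_R(0)} ε |x|^{2α} (ε + |x|^{2(1+α)})⁻² dx
  = (π/(1+α)) R^{2(1+α)} / (ε + R^{2(1+α)})`. -/
theorem stmt_1 (α ε R : ℝ) (hα : -1 < α) (hε : 0 < ε) (hR : 0 < R) :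
    (∫ x in Metric.ball (0 : EuclideanSpace ℝ (Fin 2)) R,
      ε * ‖x‖ ^ (2 * α) / (ε + ‖x‖ ^ (2 * (1 + α))) ^ 2)
    = (π / (1 + α)) * R ^ (2 * (1 + α)) / (ε + R ^ (2 * (1 + α))) := by
  set p := 2 * (1 + α) with hp_def
  have hp : 0 < p := by linarith
  have hradial : ∀ r ∈ Ioo 0 R, r * (ε * r ^ (2 * α) / (ε + r ^ p) ^ 2)
      = p⁻¹ * (p * ε * r ^ (p - 1) / (ε + r ^ p) ^ 2) := fun r hr ↦ by
    rw [show p - 1 = 2 * α + 1 by rw [hp_def]; ring, rpow_add_one hr.1.ne']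
    field_simp
  rw [setIntegral_ball_fun_norm_fin_two (fun r ↦ ε * r ^ (2 * α) / (ε + r ^ p) ^ 2),
    setIntegral_congr_fun measurableSet_Ioo hradial, integral_const_mul,
    integral_Ioo_deriv_rpow_div_const_add_rpow hp hε hR.le, hp_def]
  field_simp
end

section
/- Let α ∈ (−1, ∞). For ε ∈ (0, 1) set r_ε = 1/(−log ε). Then lim_{ε→0⁺} ∫_{B_{r_ε}(0)} log( ε + |x|^{2(1+α)} ) dx = 0, where the integral is over the open Euclidean ball B_{r_ε}(0) ⊂ ℝ². -/
open MeasureTheory Real Filter Metric Topology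

/-! The integrand is squeezed between `log ε` and `log 2`, so it is `O(-log ε)` on the ball, whose
area is `π r_ε² = π / log² ε`; the product is `O(1 / (-log ε))`. -/

lemma abs_log_add_le {ε t : ℝ} (hε : 0 < ε) (hε1 : ε ≤ 1) (ht0 : 0 ≤ t) (ht1 : t ≤ 1) :
    |log (ε + t)| ≤ log 2 - log ε := by
  have hlog2 : 0 ≤ log 2 := log_nonneg one_le_two
  have hlogε : log ε ≤ 0 := log_nonpos hε.le hε1
  have hlower : log ε ≤ log (ε + t) := log_le_log hε (by linarith)
  have hupper : log (ε + t) ≤ log 2 := log_le_log (by linarith) (by linarith)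
  rw [abs_le]
  constructor <;> linarith

lemma norm_setIntegral_ball_log_add_rpow_norm_le {E : Type*} [NormedAddCommGroup E]
    [ProperSpace E] [MeasurableSpace E] (μ : Measure E) [IsFiniteMeasureOnCompacts μ]
    {ε p r : ℝ} (hε : 0 < ε) (hε1 : ε ≤ 1) (hp : 0 ≤ p) (hr : r ≤ 1) :
    ‖∫ x in ball 0 r, log (ε + ‖x‖ ^ p) ∂μ‖ ≤ (log 2 - log ε) * μ.real (ball 0 r) := by
  refine norm_setIntegral_le_of_norm_le_const measure_ball_lt_top fun x hx => ?_
  have hx1 : ‖x‖ ≤ 1 := (mem_ball_zero_iff.mp hx).le.trans hr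
  exact abs_log_add_le hε hε1 (rpow_nonneg (norm_nonneg x) p)
    (rpow_le_one (norm_nonneg x) hx1 hp)

lemma tendsto_add_div_sq_atTop (c : ℝ) : Tendsto (fun L : ℝ => (c + L) / L ^ 2) atTop (𝓝 0) := by
  have hinv : Tendsto (fun L : ℝ => L⁻¹) atTop (𝓝 0) := tendsto_inv_atTop_zero
  have hlim : Tendsto (fun L : ℝ => c * L⁻¹ ^ 2 + L⁻¹) atTop (𝓝 0) := by
    simpa using (hinv.pow 2).const_mul c |>.add hinv
  refine hlim.congr' ?_
  filter_upwards [eventually_ne_atTop 0] with L hL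
  field_simp

lemma tendsto_neg_log_nhdsWithin_Ioo_atTop :
    Tendsto (fun ε : ℝ => -log ε) (𝓝[Set.Ioo 0 1] 0) atTop :=
  tendsto_neg_atTop_iff.mpr <|
    tendsto_log_nhdsGT_zero.mono_left (nhdsWithin_mono _ Set.Ioo_subset_Ioi_self)

/-- for `α ∈ (-1, ∞)` and `r_ε = 1/(-log ε)` for `ε ∈ (0,1)`,
`∫_{B_{r_ε}(0)} log(ε + |x|^{2(1+α)}) dx → 0` as `ε → 0⁺`. -/
theorem stmt_10 (α : ℝ) (hα : -1 < α) :
    Tendsto (fun ε : ℝ =>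
      ∫ x in Metric.ball (0 : EuclideanSpace ℝ (Fin 2)) (1 / (-Real.log ε)),
        Real.log (ε + ‖x‖ ^ (2 * (1 + α))))
      (nhdsWithin 0 (Set.Ioo 0 1)) (nhds 0) := by
  have hL := tendsto_neg_log_nhdsWithin_Ioo_atTop
  have hmajorant :
      Tendsto (fun ε => (log 2 + -log ε) / (-log ε) ^ 2 * π) (𝓝[Set.Ioo 0 1] 0) (𝓝 0) := by
    simpa using ((tendsto_add_div_sq_atTop (log 2)).comp hL).mul_const π
  refine squeeze_zero_norm' ?_ hmajorant
  filter_upwards [self_mem_nhdsWithin, hL.eventually_ge_atTop 1] with ε ⟨hε0, hε1⟩ hL1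
  have hr : 1 / -log ε ≤ 1 := by rw [div_le_one (by linarith)]; exact hL1
  calc _ ≤ (log 2 - log ε) * volume.real (ball (0 : EuclideanSpace ℝ (Fin 2)) (1 / -log ε)) :=
        norm_setIntegral_ball_log_add_rpow_norm_le volume hε0 hε1.le (by linarith) hr
    _ = (log 2 + -log ε) / (-log ε) ^ 2 * π := by
        rw [measureReal_def, EuclideanSpace.volume_ball_fin_two, ENNReal.toReal_mul,
          ENNReal.toReal_pow, ENNReal.toReal_ofReal (by positivity), ENNReal.toReal_ofReal pi_nonneg]
        ring
end
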